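/- arXiv:hep-th/0602256 — 2 statements merged into one kernel-verified Lean document; each statement's English description precedes it below -/
import Mathlib

section
/- Let n ≥ 2 and let g_1, …, g_n : ℝⁿ \ {0} → ℝ be continuously differentiable functions, each positively homogeneous of degree 1 − n, and set a(ξ) = Σ_{j=1}^{n} ∂g_j/∂ξ_j (ξ). Then the integral of a over the unit sphere with respect to the (n−1)-dimensional surface measure vanishes: ∫_{|ξ|=1} a(ξ) dσ(ξ) = 0. -/
/-!
Integrate `∂_v g` against the radial cutoff `w x = φ (‖x‖²)`, with `φ` a bump supported in
`(1, 4)`, and move the derivative onto `w`: `∫ w ∂_v g = -∫ (∂_v w) g`. The cutoff vanishes near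
the origin, so the singularity of `g` plays no role. In polar coordinates `x = r ω`, the
homogeneity of `g` (degree `1 - d`, so `∂_v g` has degree `-d`) makes both integrands split into
a spherical and a radial factor, and against the weight `r ^ (d - 1)` the radial factors become
`φ (r²) / r` on the left and `2 r φ' (r²) = (φ (r²))'` on the right. The latter integrates to
`0` and the former to a positive number, so `∫_{S} ∂_v g dσ = 0` for every direction `v`.
-/

open MeasureTheory Measure Metric Set Module
open scoped RealInnerProductSpace

theorem integral_eq_integral_toSphere_mul_integral_Ioi {E : Type*} [NormedAddCommGroup E]
    [NormedSpace ℝ E] [FiniteDimensional ℝ E] [MeasurableSpace E] [BorelSpace E] [Nontrivial E]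
    (μ : Measure E) [μ.IsAddHaarMeasure]
    {k : E → ℝ} {u : sphere (0 : E) 1 → ℝ} {v : ℝ → ℝ}
    (hk : ∀ r : ℝ, 0 < r → ∀ ω : sphere (0 : E) 1, k (r • (ω : E)) = u ω * v r) :
    ∫ x, k x ∂μ = (∫ ω, u ω ∂μ.toSphere) * ∫ r in Ioi (0 : ℝ), r ^ (finrank ℝ E - 1) * v r := by
  have hk_polar : ∀ x : ({0}ᶜ : Set E),
      k x = (fun p : sphere (0 : E) 1 × Ioi (0 : ℝ) ↦ u p.1 * v p.2)
        (homeomorphUnitSphereProd E x) := fun x ↦ by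
    have hx : ‖(x : E)‖ ≠ 0 := norm_ne_zero_iff.2 x.2
    simpa [homeomorphUnitSphereProd, homeomorphSphereProd, smul_inv_smul₀ hx] using
      hk ‖(x : E)‖ (norm_pos_iff.2 x.2)
        ⟨‖(x : E)‖⁻¹ • (x : E), by simp [norm_smul, inv_mul_cancel₀ hx]⟩
  calc ∫ x, k x ∂μ = ∫ x : ({0}ᶜ : Set E), k x ∂(μ.comap (↑)) := by
        rw [integral_subtype_comap (measurableSet_singleton _).compl, restrict_compl_singleton]
    _ = ∫ p : sphere (0 : E) 1 × Ioi (0 : ℝ), u p.1 * v p.2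
          ∂(μ.toSphere.prod (volumeIoiPow (finrank ℝ E - 1))) := by
        simp_rw [hk_polar]
        exact μ.measurePreserving_homeomorphUnitSphereProd.integral_comp
          (Homeomorph.measurableEmbedding _) (fun p ↦ u p.1 * v p.2)
    _ = (∫ ω, u ω ∂μ.toSphere) * ∫ r : Ioi (0 : ℝ), v r ∂(volumeIoiPow (finrank ℝ E - 1)) :=
        integral_prod_mul u fun r : Ioi (0 : ℝ) ↦ v r
    _ = _ := by
        congr 1
        rw [volumeIoiPow, integral_withDensity_eq_integral_toReal_smul
          (measurable_subtype_coe.pow_const _).ennreal_ofReal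
          (Filter.Eventually.of_forall fun _ ↦ ENNReal.ofReal_lt_top),
          integral_subtype_comap measurableSet_Ioi fun r ↦ (ENNReal.ofReal (r ^ _)).toReal • v r]
        refine setIntegral_congr_fun measurableSet_Ioi fun r hr ↦ ?_
        simp [ENNReal.toReal_ofReal (pow_nonneg (le_of_lt hr) _)]

theorem hasFDerivAt_smul_of_homogeneous {E : Type*} [NormedAddCommGroup E] [NormedSpace ℝ E]
    {f : E → ℝ} {s : ℝ} (hhom : ∀ t : ℝ, 0 < t → ∀ x : E, x ≠ 0 → f (t • x) = t ^ s * f x)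
    {ξ : E} (hξ : ξ ≠ 0) (hf : DifferentiableAt ℝ f ξ) {t : ℝ} (ht : 0 < t) :
    HasFDerivAt f (t ^ (s - 1) • fderiv ℝ f ξ) (t • ξ) := by
  have hscale : f =ᶠ[nhds (t • ξ)] fun y ↦ t ^ s * f (t⁻¹ • y) := by
    filter_upwards [isOpen_compl_singleton.mem_nhds (smul_ne_zero ht.ne' hξ)] with y hy
    rw [← hhom t ht _ (smul_ne_zero (inv_ne_zero ht.ne') hy), smul_inv_smul₀ ht.ne']
  have hcomp : HasFDerivAt (fun y ↦ f (t⁻¹ • y))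
      ((fderiv ℝ f ξ).comp (t⁻¹ • ContinuousLinearMap.id ℝ E)) (t • ξ) := by
    refine HasFDerivAt.comp (t • ξ) ?_ ((hasFDerivAt_id _).const_smul t⁻¹)
    rw [inv_smul_smul₀ ht.ne']
    exact hf.hasFDerivAt
  refine ((hcomp.const_mul (t ^ s)).congr_of_eventuallyEq hscale).congr_fderiv ?_
  ext y
  simp [Real.rpow_sub_one ht.ne']
  ring

theorem integrable_mul_of_continuousOn_of_tsupport_subset {X : Type*} [TopologicalSpace X]
    [MeasurableSpace X] [OpensMeasurableSpace X] {μ : Measure X} [IsFiniteMeasureOnCompacts μ]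
    {c h : X → ℝ} {U : Set X}
    (hc : Continuous c) (hcs : HasCompactSupport c) (hU : IsOpen U) (hcU : tsupport c ⊆ U)
    (hh : ContinuousOn h U) : Integrable (fun x ↦ c x * h x) μ :=
  ((hc.continuousOn.mul hh).continuous_of_tsupport_subset hU
    ((tsupport_mul_subset_left).trans hcU)).integrable_of_hasCompactSupport (hcs.mul_right)

noncomputable def shellBump : ContDiffBump (5 / 2 : ℝ) := ⟨1, 3 / 2, one_pos, by norm_num⟩

theorem support_shellBump : Function.support shellBump = Ioo 1 4 := by
  rw [ContDiffBump.support_eq, Real.ball_eq_Ioo]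
  norm_num [shellBump]

theorem shellBump_eq_zero {s : ℝ} (hs : s ∉ Ioo 1 4) : shellBump s = 0 := by
  rwa [← Function.notMem_support, support_shellBump]

theorem shellBump_pos {s : ℝ} (hs : s ∈ Ioo 1 4) : 0 < shellBump s :=
  shellBump.nonneg.lt_of_ne' <| Function.mem_support.1 <| support_shellBump.symm ▸ hs

section Cutoff

variable {E : Type*} [NormedAddCommGroup E]

noncomputable def shellCutoff (x : E) : ℝ := shellBump (‖x‖ ^ 2)

theorem tsupport_shellCutoff_subset :
    tsupport (shellCutoff (E := E)) ⊆ closedBall 0 2 \ ball 0 1 := by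
  refine closure_minimal (fun x hx ↦ ?_) (isClosed_closedBall.sdiff isOpen_ball)
  have h : ‖x‖ ^ 2 ∈ Ioo 1 4 := support_shellBump ▸ hx
  simp only [mem_sdiff, mem_closedBall_zero_iff, mem_ball_zero_iff, not_lt]
  constructor <;> nlinarith [h.1, h.2, norm_nonneg x]

theorem hasCompactSupport_shellCutoff [ProperSpace E] : HasCompactSupport (shellCutoff (E := E)) :=
  (isCompact_closedBall 0 2).of_isClosed_subset (isClosed_tsupport _)
    (tsupport_shellCutoff_subset.trans sdiff_subset)

theorem shellCutoff_smul [NormedSpace ℝ E] (r : ℝ) (x : E) :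
    shellCutoff (r • x) = shellBump (r ^ 2 * ‖x‖ ^ 2) := by
  simp [shellCutoff, norm_smul, mul_pow]

variable [InnerProductSpace ℝ E]

theorem contDiff_shellCutoff {n : ℕ∞} : ContDiff ℝ n (shellCutoff (E := E)) :=
  shellBump.contDiff.comp (contDiff_norm_sq ℝ)

theorem hasFDerivAt_shellCutoff (x : E) :
    HasFDerivAt shellCutoff ((2 * deriv shellBump (‖x‖ ^ 2)) • innerSL ℝ x) x := by
  refine ((shellBump.contDiff (n := 1).differentiable one_ne_zero _).hasDerivAt
    |>.comp_hasFDerivAt x (hasStrictFDerivAt_norm_sq x).hasFDerivAt).congr_fderiv ?_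
  ext v
  simp
  ring

end Cutoff

theorem integral_Ioi_deriv_shellBump_sq_mul :
    ∫ r in Ioi (0 : ℝ), 2 * deriv shellBump (r ^ 2) * r = 0 := by
  -- on `ℝ`, `shellCutoff r = shellBump (r ^ 2)`: compactly supported and vanishing at `0`
  have h := hasCompactSupport_shellCutoff.integral_Ioi_deriv_eq (contDiff_shellCutoff (E := ℝ)) 0
  have hderiv (r : ℝ) : deriv shellCutoff r = 2 * deriv shellBump (r ^ 2) * r := by
    simp [(hasFDerivAt_shellCutoff r).hasDerivAt.deriv]
  simpa [hderiv, shellCutoff, shellBump_eq_zero] using h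

theorem integral_Ioi_shellBump_sq_mul_inv_pos :
    0 < ∫ r in Ioi (0 : ℝ), shellBump (r ^ 2) * r⁻¹ := by
  have hvanish : ∀ r ∈ Ioi (0 : ℝ) \ Ioc 1 2, shellBump (r ^ 2) * r⁻¹ = 0 := by
    rintro r ⟨hr0, hr⟩
    rw [shellBump_eq_zero, zero_mul]
    rintro ⟨h1, h4⟩
    exact hr ⟨by nlinarith [hr0.out], by nlinarith [hr0.out]⟩
  rw [setIntegral_eq_of_subset_of_forall_sdiff_eq_zero measurableSet_Ioi
    (Ioc_subset_Ioi_self.trans (Ioi_subset_Ioi zero_le_one)) hvanish,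
    ← intervalIntegral.integral_of_le one_le_two]
  refine intervalIntegral.intervalIntegral_pos_of_pos_on ?_ (fun r hr ↦ ?_) one_lt_two
  · refine ContinuousOn.intervalIntegrable ?_
    exact (shellBump.continuous.comp (continuous_pow 2)).continuousOn.mul <|
      continuousOn_inv₀.mono fun r hr ↦ by
        rw [uIcc_of_le one_le_two] at hr
        exact (one_pos.trans_le hr.1).ne'
  · have hr0 : 0 < r := one_pos.trans hr.1
    exact mul_pos (shellBump_pos ⟨by nlinarith [hr.1], by nlinarith [hr.2]⟩) (inv_pos.2 hr0)

theorem pow_pred_mul_rpow_one_sub {r : ℝ} (hr : 0 < r) {d : ℕ} (hd : 1 ≤ d) :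
    r ^ (d - 1) * r ^ ((1 : ℝ) - d) = 1 := by
  rw [← Real.rpow_natCast, ← Real.rpow_add hr, Nat.cast_sub hd]
  norm_num

section Homogeneous

variable {E : Type*} [NormedAddCommGroup E] [InnerProductSpace ℝ E] [FiniteDimensional ℝ E]
  [MeasurableSpace E] [BorelSpace E] (μ : Measure E) [μ.IsAddHaarMeasure] {g : E → ℝ}

theorem integral_shellCutoff_mul_fderiv_eq_neg (hg : ∀ x : E, x ≠ 0 → ContDiffAt ℝ 1 g x)
    (v : E) : ∫ x, shellCutoff x * fderiv ℝ g x v ∂μ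
      = -∫ x, fderiv ℝ shellCutoff x v * g x ∂μ := by
  have hcutoff : tsupport (shellCutoff (E := E)) ⊆ {0}ᶜ :=
    tsupport_shellCutoff_subset.trans fun x hx (h0 : x = 0) ↦ hx.2 (by simp [h0])
  have hw : ContDiff ℝ 1 (shellCutoff (E := E)) := contDiff_shellCutoff
  have hgcont : ContinuousOn g {0}ᶜ := fun x hx ↦ (hg x hx).continuousAt.continuousWithinAt
  have hg'cont : ContinuousOn (fun x ↦ fderiv ℝ g x v) {0}ᶜ := fun x hx ↦
    (((hg x hx).continuousAt_fderiv one_ne_zero).clm_apply continuousAt_const).continuousWithinAt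
  exact integral_mul_fderiv_eq_neg_fderiv_mul_of_integrable
    (integrable_mul_of_continuousOn_of_tsupport_subset
      ((hw.continuous_fderiv one_ne_zero).clm_apply continuous_const)
      (hasCompactSupport_shellCutoff.fderiv_apply ℝ v) isOpen_compl_singleton
      ((tsupport_fderiv_apply_subset ℝ v).trans hcutoff) hgcont)
    (integrable_mul_of_continuousOn_of_tsupport_subset hw.continuous
      hasCompactSupport_shellCutoff isOpen_compl_singleton hcutoff hg'cont)
    (integrable_mul_of_continuousOn_of_tsupport_subset hw.continuous
      hasCompactSupport_shellCutoff isOpen_compl_singleton hcutoff hgcont)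
    (fun x _ ↦ hw.differentiable one_ne_zero x)
    (fun x hx ↦ (hg x (hcutoff hx)).differentiableAt one_ne_zero)

variable [Nontrivial E]
  (hhom : ∀ t : ℝ, 0 < t → ∀ x : E, x ≠ 0 → g (t • x) = t ^ ((1 : ℝ) - finrank ℝ E) * g x)
include hhom

theorem integral_shellCutoff_mul_fderiv_of_homogeneous
    (hg : ∀ x : E, x ≠ 0 → DifferentiableAt ℝ g x) (v : E) :
    ∫ x, shellCutoff x * fderiv ℝ g x v ∂μ
      = (∫ ω, fderiv ℝ g ω v ∂μ.toSphere) * ∫ r in Ioi (0 : ℝ), shellBump (r ^ 2) * r⁻¹ := by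
  rw [integral_eq_integral_toSphere_mul_integral_Ioi μ (u := fun ω ↦ fderiv ℝ g ω v)
    (v := fun r ↦ shellBump (r ^ 2) * r ^ ((1 : ℝ) - finrank ℝ E - 1))]
  · congr 1
    refine setIntegral_congr_fun measurableSet_Ioi fun r hr ↦ ?_
    rw [Real.rpow_sub_one (ne_of_gt hr)]
    linear_combination
      shellBump (r ^ 2) * r⁻¹ * pow_pred_mul_rpow_one_sub hr (finrank_pos (R := ℝ) (M := E))
  · intro r hr ω
    have hω : (ω : E) ≠ 0 := ne_zero_of_mem_unit_sphere ω
    rw [(hasFDerivAt_smul_of_homogeneous hhom hω (hg _ hω) hr).fderiv, shellCutoff_smul]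
    simp
    ring

theorem integral_fderiv_shellCutoff_mul_of_homogeneous (v : E) :
    ∫ x, fderiv ℝ shellCutoff x v * g x ∂μ = 0 := by
  rw [integral_eq_integral_toSphere_mul_integral_Ioi μ (u := fun ω ↦ ⟪(ω : E), v⟫ * g ω)
    (v := fun r ↦ 2 * deriv shellBump (r ^ 2) * r * r ^ ((1 : ℝ) - finrank ℝ E))]
  · rw [setIntegral_congr_fun measurableSet_Ioi (g := fun r ↦ 2 * deriv shellBump (r ^ 2) * r)
      fun r hr ↦ by linear_combination 2 * deriv shellBump (r ^ 2) * r *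
        pow_pred_mul_rpow_one_sub hr (finrank_pos (R := ℝ) (M := E)),
      integral_Ioi_deriv_shellBump_sq_mul, mul_zero]
  · intro r hr ω
    rw [(hasFDerivAt_shellCutoff _).fderiv, hhom r hr ω (ne_zero_of_mem_unit_sphere ω)]
    simp [norm_smul, abs_of_pos hr]
    ring

end Homogeneous

theorem integral_toSphere_fderiv_apply_eq_zero_of_homogeneous {E : Type*} [NormedAddCommGroup E]
    [InnerProductSpace ℝ E] [FiniteDimensional ℝ E] [MeasurableSpace E] [BorelSpace E]
    (μ : Measure E) [μ.IsAddHaarMeasure] {g : E → ℝ} (hg : ∀ x : E, x ≠ 0 → ContDiffAt ℝ 1 g x)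
    (hhom : ∀ t : ℝ, 0 < t → ∀ x : E, x ≠ 0 → g (t • x) = t ^ ((1 : ℝ) - finrank ℝ E) * g x)
    (v : E) : ∫ ω, fderiv ℝ g ω v ∂μ.toSphere = 0 := by
  rcases subsingleton_or_nontrivial E with hE | hE
  · simp [μ.toSphere_eq_zero_iff.2 hE]
  have h := integral_shellCutoff_mul_fderiv_eq_neg μ hg v
  rw [integral_shellCutoff_mul_fderiv_of_homogeneous μ hhom
      (fun x hx ↦ (hg x hx).differentiableAt one_ne_zero),
    integral_fderiv_shellCutoff_mul_of_homogeneous μ hhom, neg_zero] at h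
  exact (mul_eq_zero.1 h).resolve_right integral_Ioi_shellBump_sq_mul_inv_pos.ne'

theorem sphere_integral_of_sum_of_derivatives_eq_zero_general (n : ℕ)
    (g : Fin n → EuclideanSpace ℝ (Fin n) → ℝ)
    (hg : ∀ j : Fin n, ∀ ξ : EuclideanSpace ℝ (Fin n), ξ ≠ 0 → ContDiffAt ℝ 1 (g j) ξ)
    (hhom : ∀ j : Fin n, ∀ t : ℝ, 0 < t → ∀ ξ : EuclideanSpace ℝ (Fin n), ξ ≠ 0 →
      g j (t • ξ) = t ^ ((1 : ℝ) - n) * g j ξ) :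
    ∫ ξ : Metric.sphere (0 : EuclideanSpace ℝ (Fin n)) 1,
      (∑ j : Fin n, fderiv ℝ (g j) (ξ : EuclideanSpace ℝ (Fin n)) (EuclideanSpace.single j 1))
      ∂((volume : Measure (EuclideanSpace ℝ (Fin n))).toSphere) = 0 := by
  have hint (j : Fin n) : Integrable (fun ξ : sphere (0 : EuclideanSpace ℝ (Fin n)) 1 ↦
      fderiv ℝ (g j) ξ (EuclideanSpace.single j 1)) volume.toSphere := by
    refine Continuous.integrable_of_hasCompactSupport (continuous_iff_continuousAt.2 fun ξ ↦ ?_)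
      (HasCompactSupport.of_compactSpace _)
    exact (((hg j ξ (ne_zero_of_mem_unit_sphere ξ)).continuousAt_fderiv one_ne_zero).clm_apply
      continuousAt_const).comp continuous_subtype_val.continuousAt
  rw [integral_finsetSum _ fun j _ ↦ hint j]
  refine Finset.sum_eq_zero fun j _ ↦ integral_toSphere_fderiv_apply_eq_zero_of_homogeneous _
    (hg j) ?_ _
  simpa using hhom j

/-- If `n ≥ 2` and `g_1, …, g_n : ℝⁿ \ {0} → ℝ` are `C¹` functions, each positively homogeneous
of degree `1 − n`, then the integral over the unit sphere of `a(ξ) = Σ_j ∂g_j/∂ξ_j (ξ)`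
with respect to the surface measure vanishes. -/
theorem sphere_integral_of_sum_of_derivatives_eq_zero (n : ℕ) (hn : 2 ≤ n)
    (g : Fin n → EuclideanSpace ℝ (Fin n) → ℝ)
    (hg : ∀ j : Fin n, ∀ ξ : EuclideanSpace ℝ (Fin n), ξ ≠ 0 → ContDiffAt ℝ 1 (g j) ξ)
    (hhom : ∀ j : Fin n, ∀ t : ℝ, 0 < t → ∀ ξ : EuclideanSpace ℝ (Fin n), ξ ≠ 0 →
      g j (t • ξ) = t ^ ((1 : ℝ) - n) * g j ξ) :
    ∫ ξ : Metric.sphere (0 : EuclideanSpace ℝ (Fin n)) 1,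
      (∑ j : Fin n, fderiv ℝ (g j) (ξ : EuclideanSpace ℝ (Fin n)) (EuclideanSpace.single j 1))
      ∂((volume : Measure (EuclideanSpace ℝ (Fin n))).toSphere) = 0 :=
  sphere_integral_of_sum_of_derivatives_eq_zero_general n g hg hhom
end

section
/- Let X be a compact Hausdorff topological space. The extreme points of the set of states on C(X, ℂ) are exactly the point evaluations: a state φ is an extreme point of the state space if and only if there exists x ∈ X with φ(f) = f(x) for all f ∈ C(X, ℂ). -/
/-!
If a state `φ` is extreme and `0 ≤ g ≤ 1` with `c = φ g ∈ (0, 1)`, then `φ` is the convex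
combination `c • ψ₁ + (1 - c) • ψ₂` of the states `ψ₁ = φ (g * ·) / c` and
`ψ₂ = φ ((1 - g) * ·) / (1 - c)`, so `ψ₁ = φ`, i.e. `φ (g * a) = φ g * φ a`. Such `g`, shifted
by scalars, span the algebra, so `φ` is a character, and the characters of `C(X, ℂ)` are point
evaluations. Conversely, if `φ = t • ψ₁ + (1 - t) • ψ₂` is multiplicative, then every
`b = a - φ a • 1` has `φ (star b * b) = 0`, hence `ψ₁ (star b * b) = 0`, and Cauchy–Schwarz for
`ψ₁` gives `ψ₁ b = 0`, i.e. `ψ₁ a = φ a`.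
-/

open scoped ComplexOrder

/-- A state on `C(X, ℂ)`: a continuous linear functional which is positive
(`0 ≤ φ f` whenever `0 ≤ f` pointwise) and unital (`φ 1 = 1`). -/
def IsStateOnContinuousFunctions {X : Type*} [TopologicalSpace X] [CompactSpace X]
    (φ : C(X, ℂ) →L[ℂ] ℂ) : Prop :=
  φ 1 = 1 ∧ ∀ f : C(X, ℂ), (∀ x : X, 0 ≤ f x) → 0 ≤ φ f

-- Cauchy–Schwarz in the GNS pre-inner product `⟪x, y⟫ = f (star x * y)`.
lemma PositiveLinearMap.map_mul_eq_zero_of_map_star_mul_self_eq_zero {A : Type*}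
    [NonUnitalCStarAlgebra A] [PartialOrder A] [StarOrderedRing A] (f : A →ₚ[ℂ] ℂ) {a : A}
    (ha : f (star a * a) = 0) (b : A) : f (b * a) = 0 := by
  have hnorm : ‖f.toPreGNS a‖ = 0 := by
    simpa [ha] using f.preGNS_norm_sq (f.toPreGNS a)
  have h := norm_inner_le_norm (𝕜 := ℂ) (f.toPreGNS (star b)) (f.toPreGNS a)
  rw [hnorm, mul_zero, norm_le_zero_iff, f.preGNS_inner_def] at h
  simpa using h

section State

variable {A : Type*} [CStarAlgebra A] [PartialOrder A]

def IsState (φ : A →L[ℂ] ℂ) : Prop :=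
  φ 1 = 1 ∧ ∀ a, 0 ≤ a → 0 ≤ φ a

namespace IsState

variable {φ : A →L[ℂ] ℂ}

lemma map_algebraMap (hφ : IsState φ) (r : ℝ) : φ (algebraMap ℝ A r) = r := by
  rw [Algebra.algebraMap_eq_smul_one, ← Complex.coe_smul, map_smul, hφ.1, smul_eq_mul, mul_one]

variable [StarOrderedRing A]

lemma map_eq_zero_of_map_star_mul_self_eq_zero (hφ : IsState φ) {a : A}
    (ha : φ (star a * a) = 0) : φ a = 0 := by
  have h : φ (1 * a) = 0 :=
    (PositiveLinearMap.mk₀ φ.toLinearMap hφ.2).map_mul_eq_zero_of_map_star_mul_self_eq_zero ha 1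
  rwa [one_mul] at h

theorem mem_extremePoints_of_map_star_mul_self (hφ : IsState φ)
    (hmul : ∀ a, φ (star a * a) = star (φ a) * φ a) :
    φ ∈ Set.extremePoints ℝ {ψ : A →L[ℂ] ℂ | IsState ψ} := by
  refine ⟨hφ, fun ψ₁ hψ₁ ψ₂ hψ₂ ⟨s, t, hs, ht, _, hφ_eq⟩ => ?_⟩
  ext a
  set b := a - φ a • 1
  have hb : φ b = 0 := by simp [b, hφ.1]
  have hbb : s • ψ₁ (star b * b) + t • ψ₂ (star b * b) = 0 := by
    have h := hmul b
    rw [hb, star_zero, zero_mul, ← hφ_eq] at h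
    simpa using h
  have hψ₁bb : ψ₁ (star b * b) = 0 := by
    have h := (add_eq_zero_iff_of_nonneg (smul_nonneg hs.le (hψ₁.2 _ (star_mul_self_nonneg b)))
      (smul_nonneg ht.le (hψ₂.2 _ (star_mul_self_nonneg b)))).1 hbb
    exact (smul_eq_zero.1 h.1).resolve_left hs.ne'
  simpa [b, hψ₁.1, sub_eq_zero] using hψ₁.map_eq_zero_of_map_star_mul_self_eq_zero hψ₁bb

end IsState

end State

namespace IsState

variable {A : Type*} [CommCStarAlgebra A] [PartialOrder A] [StarOrderedRing A]
  {φ : A →L[ℂ] ℂ}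

lemma inv_smul_comp_mul (hφ : IsState φ) {g : A} (hg : 0 ≤ g) (hφg : φ g ≠ 0) :
    IsState ((φ g)⁻¹ • φ ∘L ContinuousLinearMap.mul ℂ A g) := by
  refine ⟨by simp [hφg], fun a ha => ?_⟩
  simp only [smul_apply, ContinuousLinearMap.comp_apply, ContinuousLinearMap.mul_apply',
    smul_eq_mul]
  exact mul_nonneg (inv_nonneg_of_nonneg (hφ.2 g hg))
    (hφ.2 _ ((Commute.all g a).mul_nonneg hg ha))

lemma map_mul_of_mem_extremePoints_of_nonneg_of_le_one
    (hφ : φ ∈ Set.extremePoints ℝ {ψ : A →L[ℂ] ℂ | IsState ψ}) {g : A} (hg₀ : 0 ≤ g)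
    (hg₁ : g ≤ 1) (hφg₀ : 0 < φ g) (hφg₁ : φ g < 1) (a : A) : φ (g * a) = φ g * φ a := by
  obtain ⟨c, hc⟩ : ∃ c : ℝ, φ g = c :=
    ⟨_, Complex.eq_re_of_ofReal_le (by rw [Complex.ofReal_zero]; exact hφg₀.le)⟩
  rw [hc] at hφg₀ hφg₁ ⊢
  have hc₀ : (c : ℂ) ≠ 0 := hφg₀.ne'
  have hc₁ : (1 - c : ℂ) ≠ 0 := (sub_pos.2 hφg₁).ne'
  have hφg' : φ (1 - g) = 1 - c := by simp [hc, hφ.1.1]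
  have hψ₁ := hφ.1.inv_smul_comp_mul hg₀ (hc ▸ hc₀)
  have hψ₂ := hφ.1.inv_smul_comp_mul (sub_nonneg.2 hg₁) (hφg' ▸ hc₁)
  have hseg : φ ∈ openSegment ℝ ((φ g)⁻¹ • φ ∘L ContinuousLinearMap.mul ℂ A g)
      ((φ (1 - g))⁻¹ • φ ∘L ContinuousLinearMap.mul ℂ A (1 - g)) := by
    refine ⟨c, 1 - c, by exact_mod_cast hφg₀, by exact_mod_cast sub_pos.2 hφg₁, by ring, ?_⟩
    ext b
    simp only [hc, hφg', map_sub, ContinuousLinearMap.comp_sub, add_apply, smul_apply,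
      ContinuousLinearMap.comp_apply, ContinuousLinearMap.mul_apply', smul_eq_mul,
      Complex.real_smul, sub_apply, one_mul, Complex.ofReal_sub, Complex.ofReal_one, sub_mul]
    field_simp
    ring
  have hψ₁_eq : (c : ℂ)⁻¹ * φ (g * a) = φ a := by
    simpa [hc] using congr($(hφ.2 hψ₁ hψ₂ hseg) a)
  rw [← hψ₁_eq, mul_inv_cancel_left₀ hc₀]

lemma map_mul_of_mem_extremePoints_of_nonneg_of_norm_le
    (hφ : φ ∈ Set.extremePoints ℝ {ψ : A →L[ℂ] ℂ | IsState ψ}) {b : A} (hb₀ : 0 ≤ b)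
    (hb₁ : ‖b‖ ≤ 1 / 2) (a : A) : φ (b * a) = φ b * φ a := by
  have hb : b ≤ algebraMap ℝ A (1 / 2) :=
    (IsSelfAdjoint.of_nonneg hb₀).le_algebraMap_norm_self.trans (algebraMap_mono A hb₁)
  have hg₀ : 0 ≤ b + algebraMap ℝ A (1 / 4) := add_nonneg hb₀ (algebraMap_nonneg A (by norm_num))
  have hg₁ : b + algebraMap ℝ A (1 / 4) ≤ 1 := by
    calc b + algebraMap ℝ A (1 / 4) ≤ algebraMap ℝ A (1 / 2) + algebraMap ℝ A (1 / 4) := by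
          gcongr
      _ ≤ 1 := by
          rw [← map_add, ← map_one (algebraMap ℝ A)]
          exact algebraMap_mono A (by norm_num)
  have hφb₀ : 0 ≤ φ b := hφ.1.2 b hb₀
  have hφb₁ : φ b ≤ (1 / 2 : ℝ) := by
    simpa [hφ.1.map_algebraMap] using hφ.1.2 _ (sub_nonneg.2 hb)
  have key := map_mul_of_mem_extremePoints_of_nonneg_of_le_one hφ hg₀ hg₁ ?_ ?_ a
  · simpa [add_mul, hφ.1.1, Algebra.algebraMap_eq_smul_one] using key
  · rw [map_add, hφ.1.map_algebraMap]
    exact add_pos_of_nonneg_of_pos hφb₀ (by exact_mod_cast (by norm_num : (0 : ℝ) < 1 / 4))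
  · rw [map_add, hφ.1.map_algebraMap]
    calc φ b + (1 / 4 : ℝ) ≤ (1 / 2 : ℝ) + (1 / 4 : ℝ) := by gcongr
      _ < 1 := by exact_mod_cast (by norm_num : (1 / 2 : ℝ) + 1 / 4 < 1)

theorem map_mul_of_mem_extremePoints
    (hφ : φ ∈ Set.extremePoints ℝ {ψ : A →L[ℂ] ℂ | IsState ψ}) (a b : A) :
    φ (a * b) = φ a * φ b := by
  have h := LinearMap.ext_on (CStarAlgebra.span_nonneg_inter_closedBall (A := A) one_half_pos)
    (f := φ.toLinearMap ∘ₗ LinearMap.mulRight ℂ b) (g := φ b • φ.toLinearMap)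
    fun c ⟨hc₀, hc₁⟩ => by
      simpa [mul_comm (φ b)] using map_mul_of_mem_extremePoints_of_nonneg_of_norm_le hφ hc₀
        (mem_closedBall_zero_iff.1 hc₁) b
  simpa [mul_comm (φ b)] using LinearMap.congr_fun h a

end IsState

section ContinuousMap

variable {X : Type*} [TopologicalSpace X] [CompactSpace X]

lemma isStateOnContinuousFunctions_iff_isState {φ : C(X, ℂ) →L[ℂ] ℂ} :
    IsStateOnContinuousFunctions φ ↔ IsState φ := by
  simp [IsStateOnContinuousFunctions, IsState, ContinuousMap.le_def]

lemma ContinuousLinearMap.exists_apply_eq_eval_of_map_mul [T2Space X] {φ : C(X, ℂ) →L[ℂ] ℂ}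
    (h₁ : φ 1 = 1) (hmul : ∀ f g, φ (f * g) = φ f * φ g) : ∃ x, ∀ f, φ f = f x := by
  have hφ : (φ : WeakDual ℂ C(X, ℂ)) ≠ 0 := fun h => by simp [h] at h₁
  obtain ⟨x, hx⟩ := (WeakDual.CharacterSpace.continuousMapEval_bijective X ℂ).2 ⟨φ, hφ, hmul⟩
  exact ⟨x, fun f => (DFunLike.congr_fun hx f).symm⟩

end ContinuousMap

/-- For a compact Hausdorff space `X`, the extreme points of the state space of `C(X, ℂ)`
are exactly the point evaluations. -/
theorem extremePoints_stateSpace_eq_point_evaluations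
    (X : Type*) [TopologicalSpace X] [CompactSpace X] [T2Space X]
    (φ : C(X, ℂ) →L[ℂ] ℂ) (hφ : IsStateOnContinuousFunctions φ) :
    φ ∈ Set.extremePoints ℝ {ψ : C(X, ℂ) →L[ℂ] ℂ | IsStateOnContinuousFunctions ψ} ↔
      ∃ x : X, ∀ f : C(X, ℂ), φ f = f x := by
  simp only [isStateOnContinuousFunctions_iff_isState] at hφ ⊢
  constructor
  · exact fun h => φ.exists_apply_eq_eval_of_map_mul hφ.1 (IsState.map_mul_of_mem_extremePoints h)
  · rintro ⟨x, hx⟩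
    exact hφ.mem_extremePoints_of_map_star_mul_self fun f => by simp [hx]
end
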